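/- Let d ≥ 1, let Σ be a symmetric d×d real matrix such that β′Σβ ≥ λ‖β‖² for all β ∈ ℝ^d with some λ > 0, let S ∈ ℝ^d, define Q(β) = −S′β + (1/2)β′Σβ with unique minimizer β̂_Q = Σ^{−1}S, and note Q(β) = (1/2)(β − β̂_Q)′Σ(β − β̂_Q) − (1/2)β̂_Q′Σβ̂_Q. Let L : ℝ^d → ℝ be convex, let δ > 0, and set r = sup_{‖β − β̂_Q‖ ≤ δ} |L(β) − Q(β)|. If 4r < λδ², then for every β with ‖β − β̂_Q‖ > δ one has L(β) ≥ L(β̂_Q) + (‖β − β̂_Q‖/δ)·(λδ²/2 − 2r) > L(β̂_Q); consequently every minimizer of L over ℝ^d lies in the closed ball {β : ‖β − β̂_Q‖ ≤ δ}. -/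

import Mathlib

open MeasureTheory Matrix

/-- Reinterpret a plain vector as an element of Euclidean space. -/
def toEuc {d : ℕ} (v : Fin d → ℝ) : EuclideanSpace ℝ (Fin d) := WithLp.toLp 2 v

lemma quad_expand {d : ℕ} (A : Matrix (Fin d) (Fin d) ℝ) (hA : Aᵀ = A)
    (S u h : Fin d → ℝ) (hu : A.mulVec u = S) :
    -(S ⬝ᵥ (u + h)) + (1 / 2) * ((u + h) ⬝ᵥ A.mulVec (u + h)) =
      (-(S ⬝ᵥ u) + (1 / 2) * (u ⬝ᵥ A.mulVec u)) + (1 / 2) * (h ⬝ᵥ A.mulVec h) := by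
  have hsym : u ⬝ᵥ A.mulVec h = h ⬝ᵥ S := by
    rw [Matrix.dotProduct_mulVec, ← Matrix.mulVec_transpose, hA, hu, dotProduct_comm]
  have h2 : h ⬝ᵥ A.mulVec u = h ⬝ᵥ S := by rw [hu]
  simp only [Matrix.mulVec_add, dotProduct_add, add_dotProduct, hsym, h2,
    dotProduct_comm S h]
  ring

theorem convex_quadratic_localization
    {d : ℕ} (hd : 1 ≤ d)
    (A : Matrix (Fin d) (Fin d) ℝ) (hA : A.IsSymm)
    (lam : ℝ) (hlam : 0 < lam)
    (hpos : ∀ β : EuclideanSpace ℝ (Fin d), lam * ‖β‖ ^ 2 ≤ β ⬝ᵥ A.mulVec β)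
    (S : EuclideanSpace ℝ (Fin d))
    (Q : EuclideanSpace ℝ (Fin d) → ℝ)
    (hQ : ∀ β : EuclideanSpace ℝ (Fin d), Q β = -(S ⬝ᵥ β) + (1 / 2) * (β ⬝ᵥ A.mulVec β))
    (βQ : EuclideanSpace ℝ (Fin d))
    (hβQ : βQ = toEuc (A⁻¹.mulVec S))
    (L : EuclideanSpace ℝ (Fin d) → ℝ)
    (hL : ConvexOn ℝ Set.univ L)
    (δ : ℝ) (hδ : 0 < δ)
    (r : ℝ)
    (hr : r = sSup ((fun β => |L β - Q β|) '' Metric.closedBall βQ δ))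
    (hsmall : 4 * r < lam * δ ^ 2) :
    (∀ β : EuclideanSpace ℝ (Fin d), δ < ‖β - βQ‖ →
        L βQ + ‖β - βQ‖ / δ * (lam * δ ^ 2 / 2 - 2 * r) ≤ L β ∧ L βQ < L β) ∧
      ∀ βstar : EuclideanSpace ℝ (Fin d), (∀ β, L βstar ≤ L β) → ‖βstar - βQ‖ ≤ δ := by
  -- A is invertible
  have hdet : A.det ≠ 0 := by
    intro h0
    obtain ⟨v, hv, hv0⟩ := (Matrix.exists_mulVec_eq_zero_iff).2 h0
    have h1 := hpos (toEuc v)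
    have hw0 : A.mulVec (toEuc v) = 0 := hv0
    rw [hw0] at h1
    simp only [dotProduct_zero] at h1
    have hvne : toEuc v ≠ 0 := fun h => hv (by simpa [toEuc] using congrArg WithLp.ofLp h)
    have hnp : 0 < ‖toEuc v‖ := norm_pos_iff.2 hvne
    have h2 : 0 < lam * ‖toEuc v‖ ^ 2 := mul_pos hlam (pow_pos hnp 2)
    linarith
  have hAβQ : A.mulVec βQ = S := by
    rw [hβQ]
    show A *ᵥ (A⁻¹ *ᵥ S) = S
    rw [Matrix.mulVec_mulVec, Matrix.mul_nonsing_inv A (isUnit_iff_ne_zero.2 hdet),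
      Matrix.one_mulVec]
  -- continuity
  have hLc : Continuous L := by
    rw [← continuousOn_univ]
    simpa using hL.continuousOn isOpen_univ
  have hQc : Continuous Q := by
    have hfe : Q = fun β : EuclideanSpace ℝ (Fin d) => -(S ⬝ᵥ β) + (1 / 2) * (β ⬝ᵥ A.mulVec β) :=
      funext hQ
    rw [hfe]
    simp only [dotProduct, Matrix.mulVec]
    fun_prop
  have hcpt : IsCompact ((fun β => |L β - Q β|) '' Metric.closedBall βQ δ) :=
    (isCompact_closedBall βQ δ).image ((hLc.sub hQc).abs)
  have hub : ∀ x ∈ Metric.closedBall βQ δ, |L x - Q x| ≤ r := fun x hx => by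
    rw [hr]; exact le_csSup hcpt.bddAbove ⟨x, hx, rfl⟩
  have hr0 : 0 ≤ r :=
    le_trans (abs_nonneg _) (hub βQ (Metric.mem_closedBall_self hδ.le))
  have hc : 0 < lam * δ ^ 2 / 2 - 2 * r := by nlinarith
  have main : ∀ β : EuclideanSpace ℝ (Fin d), δ < ‖β - βQ‖ →
      L βQ + ‖β - βQ‖ / δ * (lam * δ ^ 2 / 2 - 2 * r) ≤ L β ∧ L βQ < L β := by
    intro β hβ
    set n := ‖β - βQ‖ with hn_def
    have hn : 0 < n := hδ.trans hβ
    set t := δ / n with ht_def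
    have ht : 0 < t := div_pos hδ hn
    have ht1 : t < 1 := (div_lt_one hn).2 hβ
    set βt : EuclideanSpace ℝ (Fin d) := βQ + t • (β - βQ) with hβt_def
    have hsub : βt - βQ = t • (β - βQ) := by rw [hβt_def]; abel
    have hβt_norm : ‖βt - βQ‖ = δ := by
      rw [hsub, norm_smul, Real.norm_of_nonneg ht.le, ht_def]
      field_simp
      exact hn_def.symm
    have hβt_mem : βt ∈ Metric.closedBall βQ δ := by
      rw [Metric.mem_closedBall, dist_eq_norm, hβt_norm]
    have hkey0 : ∀ g : EuclideanSpace ℝ (Fin d),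
        Q (βQ + g) = Q βQ + (1 / 2) * (g ⬝ᵥ A.mulVec g) := by
      intro g
      rw [hQ, hQ]
      exact quad_expand A hA S βQ g hAβQ
    have hkey : Q βt = Q βQ + (1 / 2) * ((βt - βQ) ⬝ᵥ A.mulVec (βt - βQ)) := by
      have e : βQ + (βt - βQ) = βt := by abel
      have := hkey0 (βt - βQ)
      rwa [e] at this
    have hquad : lam * δ ^ 2 ≤ (βt - βQ) ⬝ᵥ A.mulVec (βt - βQ) := by
      have := hpos (βt - βQ)
      rwa [hβt_norm] at this
    have hQdiff : lam * δ ^ 2 / 2 ≤ Q βt - Q βQ := by rw [hkey]; linarith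
    have hconv : L βt ≤ (1 - t) * L βQ + t * L β := by
      have e2 : (1 - t) • βQ + t • β = βt := by
        rw [hβt_def]; module
      have := hL.2 (Set.mem_univ βQ) (Set.mem_univ β) (by linarith : (0:ℝ) ≤ 1 - t) ht.le
        (by ring : (1 - t) + t = 1)
      rwa [e2] at this
    have hb1 := abs_le.1 (hub βt hβt_mem)
    have hb2 := abs_le.1 (hub βQ (Metric.mem_closedBall_self hδ.le))
    have h5 : lam * δ ^ 2 / 2 - 2 * r ≤ t * (L β - L βQ) := by nlinarith
    have h6 : (lam * δ ^ 2 / 2 - 2 * r) / t ≤ L β - L βQ := (div_le_iff₀ ht).2 (by linarith)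
    have h7 : (lam * δ ^ 2 / 2 - 2 * r) / t = n / δ * (lam * δ ^ 2 / 2 - 2 * r) := by
      rw [ht_def]
      field_simp
    have h8 : 1 < n / δ := (one_lt_div hδ).2 hβ
    have h9 : lam * δ ^ 2 / 2 - 2 * r ≤ n / δ * (lam * δ ^ 2 / 2 - 2 * r) :=
      le_mul_of_one_le_left hc.le h8.le
    constructor
    · linarith [h6, h7]
    · linarith [h6, h7, h9, hc]
  refine ⟨main, fun βstar hm => ?_⟩
  by_contra hgt
  push_neg at hgt
  exact absurd (hm βQ) (not_le.2 (main βstar hgt).2)
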